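/- Concavity of the operator objective under nonnegative marginal payoffs (abstract form of the paper's Lemma 1): Let E be a finite index set. For each e ∈ E, let Δ_e ≥ 0, D_e ≥ 0, ĉ_e ≥ 0, κ > 0, γ_e ≥ 0, δ_e ≥ 0 be constants, let u_e : ℝ^E → ℝ be an affine map with u_e(d) ≥ 0 for all d ∈ [0,1]^E, and let c_0 ∈ ℝ and s_max > 0. Define p_e(d) = 1/(1 + exp(−u_e(d))), y_e(d, s) = min(D_e · p_e(d), ĉ_e + κ · s_e), and f(d, s) = c_0 + ∑_{e∈E} ( Δ_e · y_e(d, s) − γ_e · d_e − δ_e · s_e ). Then f is concave on the convex set [0,1]^E × [0, s_max]^E. -/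

import Mathlib

lemma sigmoid_concaveOn : ConcaveOn ℝ (Set.Ici (0:ℝ)) (fun t => 1 / (1 + Real.exp (-t))) := by
  have hpos : ∀ t : ℝ, 0 < 1 + Real.exp (-t) := fun t => by positivity
  have hd1 : ∀ t : ℝ, HasDerivAt (fun t => 1 / (1 + Real.exp (-t)))
      (Real.exp (-t) / (1 + Real.exp (-t))^2) t := by
    intro t
    have h : HasDerivAt (fun t : ℝ => 1 + Real.exp (-t)) (-Real.exp (-t)) t := by
      simpa using ((hasDerivAt_neg t).exp.const_add 1)
    have := h.fun_inv (ne_of_gt (hpos t))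
    simp only [one_div]
    convert! this using 1
    field_simp
  have hd2 : ∀ t : ℝ, HasDerivAt (fun t => Real.exp (-t) / (1 + Real.exp (-t))^2)
      (Real.exp (-t) * (Real.exp (-t) - 1) / (1 + Real.exp (-t))^3) t := by
    intro t
    have hnum : HasDerivAt (fun t : ℝ => Real.exp (-t)) (-Real.exp (-t)) t := by
      simpa using (hasDerivAt_neg t).exp
    have hden : HasDerivAt (fun t : ℝ => (1 + Real.exp (-t))^2)
        (2 * (1 + Real.exp (-t)) * (-Real.exp (-t))) t := by
      have h : HasDerivAt (fun t : ℝ => 1 + Real.exp (-t)) (-Real.exp (-t)) t := by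
        simpa using ((hasDerivAt_neg t).exp.const_add 1)
      simpa [mul_comm, mul_assoc, mul_left_comm] using h.fun_pow 2
    have := hnum.fun_div hden (by positivity)
    convert! this using 1
    have h0 : (1 : ℝ) + Real.exp (-t) ≠ 0 := ne_of_gt (hpos t)
    field_simp
    ring
  apply concaveOn_of_hasDerivWithinAt2_nonpos (convex_Ici 0)
    (f' := fun t => Real.exp (-t) / (1 + Real.exp (-t))^2)
    (f'' := fun t => Real.exp (-t) * (Real.exp (-t) - 1) / (1 + Real.exp (-t))^3)
  · exact Continuous.continuousOn (by fun_prop (disch := intro t; positivity))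
  · exact fun x _ => (hd1 x).hasDerivWithinAt
  · exact fun x _ => (hd2 x).hasDerivWithinAt
  · intro x hx
    rw [interior_Ici] at hx
    have h1 : Real.exp (-x) ≤ 1 := Real.exp_le_one_iff.mpr (by linarith [hx.out])
    have := Real.exp_pos (-x)
    apply div_nonpos_of_nonpos_of_nonneg
    · nlinarith
    · positivity

lemma concaveOn_finset_sum {ι F : Type*} [AddCommGroup F] [Module ℝ F] {s : Set F}
    (hs : Convex ℝ s) (t : Finset ι) (f : ι → F → ℝ)
    (h : ∀ i ∈ t, ConcaveOn ℝ s (f i)) :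
    ConcaveOn ℝ s (fun x => ∑ i ∈ t, f i x) := by
  classical
  induction t using Finset.induction_on with
  | empty => simpa using concaveOn_const 0 hs
  | insert a t hx ih =>
      simp_rw [Finset.sum_insert hx]
      exact (h _ (Finset.mem_insert_self _ _)).add (ih fun i hi => h i (Finset.mem_insert_of_mem hi))



/-- Concavity of the operator objective under nonnegative marginal payoffs (abstract
form of the paper's Lemma 1).  For each edge `e`, `p_e(d) = 1/(1 + exp(−u_e(d)))` is
the logit share, `y_e(d,s) = min (D_e p_e(d)) (chat_e + κ s_e)` the served flow, and
`f(d,s) = c₀ + ∑ e, (Δ_e y_e(d,s) − γ_e d_e − δ_e s_e)` is concave on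
`[0,1]^E × [0, s_max]^E`. -/
theorem operator_objective_concaveOn (E : Type*) [Fintype E]
    (Δ Dem chat γ δ : E → ℝ) (κ c₀ smax : ℝ)
    (hΔ : ∀ e, 0 ≤ Δ e) (hDem : ∀ e, 0 ≤ Dem e) (hchat : ∀ e, 0 ≤ chat e)
    (hκ : 0 < κ) (hγ : ∀ e, 0 ≤ γ e) (hδ : ∀ e, 0 ≤ δ e) (hsmax : 0 < smax)
    (u : E → ((E → ℝ) →ᵃ[ℝ] ℝ))
    (hu : ∀ e, ∀ d ∈ Set.Icc (0 : E → ℝ) 1, 0 ≤ u e d) :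
    ConcaveOn ℝ
      ((Set.Icc (0 : E → ℝ) 1) ×ˢ (Set.Icc (0 : E → ℝ) (fun _ => smax)))
      (fun ds : (E → ℝ) × (E → ℝ) =>
        c₀ + ∑ e, (Δ e * min (Dem e * (1 / (1 + Real.exp (-(u e ds.1)))))
            (chat e + κ * ds.2 e)
          - γ e * ds.1 e - δ e * ds.2 e)) := by
  set S := (Set.Icc (0 : E → ℝ) 1) ×ˢ (Set.Icc (0 : E → ℝ) (fun _ => smax)) with hSdef
  have hS : Convex ℝ S := (convex_Icc _ _).prod (convex_Icc _ _)
  have hsummand : ∀ e, ConcaveOn ℝ S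
      (fun ds : (E → ℝ) × (E → ℝ) =>
        Δ e * min (Dem e * (1 / (1 + Real.exp (-(u e ds.1))))) (chat e + κ * ds.2 e)
          - γ e * ds.1 e - δ e * ds.2 e) := by
    intro e
    have hσ : ConcaveOn ℝ S
        (fun ds : (E → ℝ) × (E → ℝ) => 1 / (1 + Real.exp (-(u e ds.1)))) := by
      refine ⟨hS, ?_⟩
      intro x hx y hy p q hp hq hpq
      have h1 : (p • x + q • y).1 = p • x.1 + q • y.1 := rfl
      rw [show (fun ds : (E → ℝ) × (E → ℝ) => 1 / (1 + Real.exp (-(u e ds.1))))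
          (p • x + q • y) = 1 / (1 + Real.exp (-(u e (p • x.1 + q • y.1)))) from rfl,
        Convex.combo_affine_apply hpq]
      exact sigmoid_concaveOn.2 (hu e x.1 hx.1) (hu e y.1 hy.1) hp hq hpq
    have hf : ConcaveOn ℝ S
        (fun ds : (E → ℝ) × (E → ℝ) => Dem e * (1 / (1 + Real.exp (-(u e ds.1))))) := by
      simpa [smul_eq_mul] using hσ.smul (hDem e)
    have hg : ConcaveOn ℝ S
        (fun ds : (E → ℝ) × (E → ℝ) => chat e + κ * ds.2 e) := by
      refine ⟨hS, fun x _ y _ p q hp hq hpq => le_of_eq ?_⟩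
      have h2 : (p • x + q • y).2 e = p * x.2 e + q * y.2 e := rfl
      simp only [smul_eq_mul, h2]
      have hq' : q = 1 - p := by linarith
      subst hq'; ring
    have hmin : ConcaveOn ℝ S
        (fun ds : (E → ℝ) × (E → ℝ) =>
          min (Dem e * (1 / (1 + Real.exp (-(u e ds.1))))) (chat e + κ * ds.2 e)) := by
      have := hf.inf hg
      exact this
    have hlin : ConcaveOn ℝ S
        (fun ds : (E → ℝ) × (E → ℝ) => -(γ e * ds.1 e) - δ e * ds.2 e) := by
      refine ⟨hS, fun x _ y _ p q hp hq hpq => le_of_eq ?_⟩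
      have h1 : (p • x + q • y).1 e = p * x.1 e + q * y.1 e := rfl
      have h2 : (p • x + q • y).2 e = p * x.2 e + q * y.2 e := rfl
      simp only [smul_eq_mul, h1, h2]
      have hq' : q = 1 - p := by linarith
      subst hq'; ring
    have heq : (fun ds : (E → ℝ) × (E → ℝ) =>
        Δ e * min (Dem e * (1 / (1 + Real.exp (-(u e ds.1))))) (chat e + κ * ds.2 e)
          - γ e * ds.1 e - δ e * ds.2 e)
      = fun ds : (E → ℝ) × (E → ℝ) =>
        Δ e • min (Dem e * (1 / (1 + Real.exp (-(u e ds.1))))) (chat e + κ * ds.2 e)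
          + (-(γ e * ds.1 e) - δ e * ds.2 e) := by
      funext ds; simp [smul_eq_mul]; ring
    rw [heq]
    exact (hmin.smul (hΔ e)).add hlin
  have hsum : ConcaveOn ℝ S
      (fun ds : (E → ℝ) × (E → ℝ) =>
        ∑ e, (Δ e * min (Dem e * (1 / (1 + Real.exp (-(u e ds.1))))) (chat e + κ * ds.2 e)
          - γ e * ds.1 e - δ e * ds.2 e)) :=
    concaveOn_finset_sum hS Finset.univ _ (fun e _ => hsummand e)
  exact (concaveOn_const c₀ hS).add hsum
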